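/- Let m ≥ r and let e_I = e_{i_1}···e_{i_s} be a product of distinct generators of the Clifford algebra Cl_m (generators satisfying e_j e_k + e_k e_j = -2δ_{jk}). Then e_I commutes with every element e_i e_j with 1 ≤ i < j ≤ r if and only if I ⊆ {r+1,...,m} or {1,...,r} ⊆ I. -/

import Mathlib

/-- The negative definite quadratic form on `ℝⁿ`. -/
noncomputable def Qneg (n : ℕ) : QuadraticForm ℝ (Fin n → ℝ) :=
  QuadraticMap.weightedSumSquares ℝ (fun _ : Fin n => (-1 : ℝ))

/-- The Clifford algebra `Cl_n` with `e_j e_k + e_k e_j = -2 δ_{jk}`. -/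
noncomputable abbrev Cl (n : ℕ) := CliffordAlgebra (Qneg n)

/-- The standard generators `e_i` of `Cl_n`. -/
noncomputable def gen (n : ℕ) (i : Fin n) : Cl n :=
  CliffordAlgebra.ι (Qneg n) (Pi.single i 1)

/-- For an index set `I = {i₁ < ⋯ < i_s}`, the basis element `e_I = e_{i₁} ⋯ e_{i_s}`. -/
noncomputable def eProd (n : ℕ) (I : Finset (Fin n)) : Cl n :=
  ((I.sort (· ≤ ·)).map (gen n)).prod

/-!
The generators anticommute pairwise, so moving `e_i` across `e_I` costs the sign
`(-1)^{#(I \ {i})}`, and moving `e_i e_j` across it costs the product of two such signs.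
That product is `1` exactly when `i` and `j` are both in `I` or both outside it; otherwise
`e_I e_i e_j = -(e_i e_j e_I)`, and commuting would make the invertible element `e_I e_i e_j`
equal to its own negative, hence zero.
Hence `e_I` commutes with all `e_i e_j`, `i < j ≤ r`, iff membership in `I` is constant on
`{1, …, r}`.
-/

open Finset

lemma Finset.countP_sort_ne {α : Type*} [LinearOrder α] (I : Finset α) (i : α) :
    (I.sort (· ≤ ·)).countP (· ≠ i) = #(I.erase i) := by
  rw [← Multiset.coe_countP, Finset.sort_eq, Multiset.countP_eq_card_filter,
    ← Finset.filter_val, Finset.filter_ne', Finset.card_def]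

lemma Finset.even_card_erase_add_card_erase_iff {α : Type*} [DecidableEq α] (I : Finset α)
    (i j : α) : Even (#(I.erase i) + #(I.erase j)) ↔ (i ∈ I ↔ j ∈ I) := by
  rw [Nat.even_iff, Finset.card_erase_eq_ite, Finset.card_erase_eq_ite]
  have hpos : ∀ k ∈ I, 0 < #I := fun k hk => Finset.card_pos.2 ⟨k, hk⟩
  by_cases hi : i ∈ I <;> by_cases hj : j ∈ I <;> simp only [hi, hj, if_true, if_false] <;> grind

lemma eq_zero_of_eq_neg {K M : Type*} [Field K] [NeZero (2 : K)] [AddCommGroup M] [Module K M]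
    {x : M} (h : x = -x) : x = 0 := by
  have h2 : (2 : K) • x = 0 := by
    rw [two_smul]
    nth_rewrite 1 [h]
    exact neg_add_cancel x
  exact (smul_eq_zero.mp h2).resolve_left two_ne_zero

lemma forall_lt_iff_iff_forall_not_or_forall {α : Type*} [LinearOrder α] (q p : α → Prop) :
    (∀ i j, q i → q j → i < j → (p i ↔ p j)) ↔ (∀ i, p i → ¬ q i) ∨ ∀ i, q i → p i := by
  constructor
  · intro h
    by_contra! ⟨⟨a, ha, haq⟩, b, hbq, hb⟩
    rcases lt_trichotomy a b with hab | rfl | hab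
    · exact hb ((h a b haq hbq hab).1 ha)
    · exact hb ha
    · exact hb ((h b a hbq haq hab).2 ha)
  · rintro (h | h) i j hi hj -
    · exact iff_of_false (fun hp => h i hp hi) (fun hp => h j hp hj)
    · exact iff_of_true (h i hi) (h j hj)

lemma Qneg_single {m : ℕ} (i : Fin m) : Qneg m (Pi.single i 1) = -1 := by
  simp [Qneg, QuadraticMap.weightedSumSquares_apply, Pi.single_apply]

lemma polar_Qneg_single_single {m : ℕ} {i j : Fin m} (hij : i ≠ j) :
    QuadraticMap.polar (Qneg m) (Pi.single i 1) (Pi.single j 1) = 0 := by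
  simp [QuadraticMap.polar, Qneg, QuadraticMap.weightedSumSquares_apply, Pi.single_apply,
    mul_add, Finset.sum_add_distrib, hij, hij.symm]

section Generators

variable {m : ℕ}

lemma gen_mul_self (i : Fin m) : gen m i * gen m i = -1 := by
  rw [gen, CliffordAlgebra.ι_sq_scalar, Qneg_single, map_neg, map_one]

lemma gen_mul_gen_of_ne {i j : Fin m} (hij : i ≠ j) :
    gen m i * gen m j = -(gen m j * gen m i) := by
  have h := CliffordAlgebra.ι_mul_ι_add_swap (Q := Qneg m) (Pi.single i 1) (Pi.single j 1)
  rw [polar_Qneg_single_single hij, map_zero] at h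
  exact eq_neg_of_add_eq_zero_left h

lemma isUnit_gen (i : Fin m) : IsUnit (gen m i) :=
  ⟨⟨gen m i, -gen m i, by rw [mul_neg, gen_mul_self, neg_neg],
    by rw [neg_mul, gen_mul_self, neg_neg]⟩, rfl⟩

lemma isUnit_eProd (I : Finset (Fin m)) : IsUnit (eProd m I) :=
  List.prod_isUnit fun _ ha => by
    obtain ⟨j, -, rfl⟩ := List.mem_map.mp ha
    exact isUnit_gen j

lemma gen_mul_list_prod (i : Fin m) (l : List (Fin m)) :
    gen m i * (l.map (gen m)).prod =
      (-1 : ℤ) ^ l.countP (· ≠ i) • ((l.map (gen m)).prod * gen m i) := by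
  induction l with
  | nil => simp
  | cons a t ih =>
    rw [List.map_cons, List.prod_cons, List.countP_cons]
    by_cases hai : a = i
    · subst hai
      simp only [ne_eq, not_true_eq_false, decide_false, Bool.false_eq_true, if_false, add_zero]
      rw [mul_assoc (gen m a), ← mul_smul_comm, ← ih]
    · simp only [ne_eq, hai, not_false_eq_true, decide_true, if_true]
      rw [← mul_assoc, gen_mul_gen_of_ne (Ne.symm hai), neg_mul, mul_assoc, ih, pow_succ,
        mul_neg_one, neg_smul, mul_smul_comm, mul_assoc]

lemma gen_mul_eProd (i : Fin m) (I : Finset (Fin m)) :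
    gen m i * eProd m I = (-1 : ℤ) ^ #(I.erase i) • (eProd m I * gen m i) := by
  rw [eProd, gen_mul_list_prod, Finset.countP_sort_ne]

lemma commute_eProd_gen_mul_gen_iff (I : Finset (Fin m)) (i j : Fin m) :
    Commute (eProd m I) (gen m i * gen m j) ↔ (i ∈ I ↔ j ∈ I) := by
  set E := eProd m I
  have hswap : gen m i * gen m j * E =
      (-1 : ℤ) ^ (#(I.erase i) + #(I.erase j)) • (E * (gen m i * gen m j)) := by
    rw [mul_assoc, gen_mul_eProd, mul_smul_comm, ← mul_assoc, gen_mul_eProd, smul_mul_assoc,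
      smul_smul, ← pow_add, add_comm, mul_assoc]
  rw [Commute, SemiconjBy, hswap, ← Finset.even_card_erase_add_card_erase_iff]
  rcases Nat.even_or_odd (#(I.erase i) + #(I.erase j)) with heven | hodd
  · simp only [heven.neg_one_pow, one_smul, heven]
  · rw [hodd.neg_one_pow, neg_one_smul, iff_false_intro (Nat.not_even_iff_odd.mpr hodd),
      iff_false]
    exact fun h => ((isUnit_eProd I).mul ((isUnit_gen i).mul (isUnit_gen j))).ne_zero
      (eq_zero_of_eq_neg (K := ℝ) h)

end Generators

theorem stmt0_general (r m : ℕ) (I : Finset (Fin m)) :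
    (∀ i j : Fin m, (i : ℕ) < r → (j : ℕ) < r → i < j →
        Commute (eProd m I) (gen m i * gen m j)) ↔
      ((∀ i ∈ I, r ≤ (i : ℕ)) ∨ (∀ i : Fin m, (i : ℕ) < r → i ∈ I)) := by
  calc _ ↔ ∀ i j : Fin m, (i : ℕ) < r → (j : ℕ) < r → i < j → (i ∈ I ↔ j ∈ I) := by
        simp only [commute_eProd_gen_mul_gen_iff]
    _ ↔ (∀ i ∈ I, ¬ (i : ℕ) < r) ∨ ∀ i : Fin m, (i : ℕ) < r → i ∈ I :=
        forall_lt_iff_iff_forall_not_or_forall _ _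
    _ ↔ _ := by simp only [not_lt]

/-- Lemma 2.1: `e_I` commutes with every `e_i e_j` (`i < j` in the first `r` indices)
iff `I ⊆ {r+1,…,m}` or `{1,…,r} ⊆ I`. -/
theorem stmt0 (r m : ℕ) (hrm : r ≤ m) (I : Finset (Fin m)) :
    (∀ i j : Fin m, (i : ℕ) < r → (j : ℕ) < r → i < j →
        Commute (eProd m I) (gen m i * gen m j)) ↔
      ((∀ i ∈ I, r ≤ (i : ℕ)) ∨ (∀ i : Fin m, (i : ℕ) < r → i ∈ I)) :=
  stmt0_general r m I
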